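/- arXiv:2205.14624 — 3 statements merged into one kernel-verified Lean document; each statement's English description precedes it below -/
import Mathlib

section
/- For probability measures μ, ν on ℝ^d with finite p-th moments, the function F(θ) := W_p^p((θ*)_#μ, (θ*)_#ν) on the unit sphere S^{d-1} is Lipschitz continuous with Lipschitz constant at most p·W_p^{p-1}(μ,ν)·(M_p(μ) + M_p(ν)) with respect to the Euclidean norm, where M_p(μ) = (∫‖x‖^p dμ)^{1/p}. -/
open MeasureTheory
open scoped ENNReal RealInnerProductSpace

/-- The `p`-Wasserstein distance between two Borel probability measures on a
normed space, as an extended nonnegative real. -/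
noncomputable def Wp {E : Type*} [NormedAddCommGroup E] [MeasurableSpace E]
    (p : ℝ) (μ ν : Measure E) : ℝ≥0∞ :=
  (⨅ π ∈ {π : Measure (E × E) |
      Measure.map Prod.fst π = μ ∧ Measure.map Prod.snd π = ν},
    ∫⁻ z : E × E, ENNReal.ofReal (‖z.1 - z.2‖ ^ p) ∂π) ^ (1 / p)

/-- Real-valued `p`-Wasserstein distance. -/
noncomputable def WpR {E : Type*} [NormedAddCommGroup E] [MeasurableSpace E]
    (p : ℝ) (μ ν : Measure E) : ℝ :=
  (Wp p μ ν).toReal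

/-- `p`-th moment `M_p(μ) = (∫ ‖x‖^p dμ)^{1/p}`. -/
noncomputable def Mp {E : Type*} [NormedAddCommGroup E] [MeasurableSpace E]
    (p : ℝ) (μ : Measure E) : ℝ :=
  (∫ x, ‖x‖ ^ p ∂μ) ^ (1 / p)

namespace SlicedAux

open ProbabilityTheory

variable {E : Type*} [NormedAddCommGroup E] [MeasurableSpace E] [BorelSpace E]
  [SecondCountableTopology E]
variable {F : Type*} [NormedAddCommGroup F] [MeasurableSpace F] [BorelSpace F]
  [SecondCountableTopology F]

/-- transport cost of a plan -/
noncomputable def cost (p : ℝ) (π : Measure (E × E)) : ℝ≥0∞ :=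
  ∫⁻ z : E × E, ENNReal.ofReal (‖z.1 - z.2‖ ^ p) ∂π

lemma Wp_eq (p : ℝ) (μ ν : Measure E) :
    Wp p μ ν = (⨅ π ∈ {π : Measure (E × E) |
      Measure.map Prod.fst π = μ ∧ Measure.map Prod.snd π = ν}, cost p π) ^ (1 / p) := rfl

lemma measurable_cost_integrand {p : ℝ} (hp0 : 0 ≤ p) :
    Measurable fun z : E × E => ENNReal.ofReal (‖z.1 - z.2‖ ^ p) :=
  ENNReal.measurable_ofReal.comp ((Real.continuous_rpow_const hp0).measurable.comp
    (measurable_fst.sub measurable_snd).norm)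

lemma Wp_le_cost {p : ℝ} (hp0 : 0 ≤ p) {μ ν : Measure E} {π : Measure (E × E)}
    (h1 : Measure.map Prod.fst π = μ) (h2 : Measure.map Prod.snd π = ν) :
    Wp p μ ν ≤ cost p π ^ (1 / p) := by
  rw [Wp_eq]
  exact ENNReal.rpow_le_rpow (iInf₂_le π ⟨h1, h2⟩) (by positivity)

lemma Wp_map_le {p : ℝ} (hp0 : 0 ≤ p) (μ : Measure E) {f g : E → F}
    (hf : Measurable f) (hg : Measurable g) :
    Wp p (μ.map f) (μ.map g) ≤ (∫⁻ x, ENNReal.ofReal (‖f x - g x‖ ^ p) ∂μ) ^ (1 / p) := by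
  have hfg : Measurable fun x => (f x, g x) := hf.prodMk hg
  have h1 : Measure.map Prod.fst (μ.map fun x => (f x, g x)) = μ.map f := by
    rw [Measure.map_map measurable_fst hfg]; rfl
  have h2 : Measure.map Prod.snd (μ.map fun x => (f x, g x)) = μ.map g := by
    rw [Measure.map_map measurable_snd hfg]; rfl
  refine (Wp_le_cost hp0 h1 h2).trans_eq ?_
  rw [cost, lintegral_map (measurable_cost_integrand hp0) hfg]

lemma Wp_contract {p : ℝ} (hp0 : 0 ≤ p) {T : E → F} (hT : Measurable T)
    (hL : ∀ x y : E, ‖T x - T y‖ ≤ ‖x - y‖) (μ ν : Measure E) :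
    Wp p (μ.map T) (ν.map T) ≤ Wp p μ ν := by
  rw [Wp_eq, Wp_eq]
  refine ENNReal.rpow_le_rpow ?_ (by positivity)
  refine le_iInf₂ fun π hπ => ?_
  have hTT : Measurable fun z : E × E => (T z.1, T z.2) :=
    (hT.comp measurable_fst).prodMk (hT.comp measurable_snd)
  refine iInf₂_le_of_le (π.map fun z => (T z.1, T z.2)) ⟨?_, ?_⟩ ?_
  · rw [Measure.map_map measurable_fst hTT, ← hπ.1, Measure.map_map hT measurable_fst]; rfl
  · rw [Measure.map_map measurable_snd hTT, ← hπ.2, Measure.map_map hT measurable_snd]; rfl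
  · rw [cost, cost, lintegral_map (measurable_cost_integrand hp0) hTT]
    refine lintegral_mono fun z => ENNReal.ofReal_le_ofReal ?_
    exact Real.rpow_le_rpow (norm_nonneg _) (hL z.1 z.2) hp0

lemma lintegral_ofReal_norm_rpow {p : ℝ} (μ : Measure E)
    (hmom : Integrable (fun x => ‖x‖ ^ p) μ) :
    ∫⁻ x, ENNReal.ofReal (‖x‖ ^ p) ∂μ = ENNReal.ofReal (∫ x, ‖x‖ ^ p ∂μ) :=
  (MeasureTheory.ofReal_integral_eq_lintegral_ofReal hmom
    (Filter.Eventually.of_forall fun x => Real.rpow_nonneg (norm_nonneg _) p)).symm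

lemma Wp_ne_top {p : ℝ} (hp : 1 ≤ p) (μ ν : Measure E)
    [IsProbabilityMeasure μ] [IsProbabilityMeasure ν]
    (hμ : Integrable (fun x => ‖x‖ ^ p) μ) (hν : Integrable (fun x => ‖x‖ ^ p) ν) :
    Wp p μ ν ≠ ⊤ := by
  have hp0 : (0 : ℝ) ≤ p := zero_le_one.trans hp
  have h1 : Measure.map Prod.fst (μ.prod ν) = μ := by
    simp [Measure.map_fst_prod]
  have h2 : Measure.map Prod.snd (μ.prod ν) = ν := by
    simp [Measure.map_snd_prod]
  have hbound : cost p (μ.prod ν) ≤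
      ENNReal.ofReal (2 ^ p) * (ENNReal.ofReal (∫ x, ‖x‖ ^ p ∂μ)
        + ENNReal.ofReal (∫ x, ‖x‖ ^ p ∂ν)) := by
    have hpt : ∀ z : E × E, ENNReal.ofReal (‖z.1 - z.2‖ ^ p) ≤
        ENNReal.ofReal (2 ^ p) * (ENNReal.ofReal (‖z.1‖ ^ p) + ENNReal.ofReal (‖z.2‖ ^ p)) := by
      rintro ⟨x, y⟩
      have hmax : ‖x - y‖ ≤ 2 * max ‖x‖ ‖y‖ := by
        refine (norm_sub_le x y).trans ?_
        have := le_max_left ‖x‖ ‖y‖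
        have := le_max_right ‖x‖ ‖y‖
        linarith
      have h0max : (0 : ℝ) ≤ max ‖x‖ ‖y‖ := le_max_of_le_left (norm_nonneg _)
      have h1' : ‖x - y‖ ^ p ≤ (2 * max ‖x‖ ‖y‖) ^ p :=
        Real.rpow_le_rpow (norm_nonneg _) hmax hp0
      have h2' : (2 * max ‖x‖ ‖y‖) ^ p = 2 ^ p * (max ‖x‖ ‖y‖) ^ p :=
        Real.mul_rpow (by norm_num) h0max
      have h3' : (max ‖x‖ ‖y‖) ^ p ≤ ‖x‖ ^ p + ‖y‖ ^ p := by
        rcases max_cases ‖x‖ ‖y‖ with ⟨hm, _⟩ | ⟨hm, _⟩ <;> rw [hm]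
        · exact le_add_of_nonneg_right (Real.rpow_nonneg (norm_nonneg _) _)
        · exact le_add_of_nonneg_left (Real.rpow_nonneg (norm_nonneg _) _)
      have hfin : ‖x - y‖ ^ p ≤ 2 ^ p * (‖x‖ ^ p + ‖y‖ ^ p) := by
        have h2p : (0 : ℝ) ≤ 2 ^ p := Real.rpow_nonneg (by norm_num) _
        nlinarith
      calc ENNReal.ofReal (‖x - y‖ ^ p) ≤ ENNReal.ofReal (2 ^ p * (‖x‖ ^ p + ‖y‖ ^ p)) :=
            ENNReal.ofReal_le_ofReal hfin
        _ = ENNReal.ofReal (2 ^ p) * (ENNReal.ofReal (‖x‖ ^ p) + ENNReal.ofReal (‖y‖ ^ p)) := by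
            rw [ENNReal.ofReal_mul (Real.rpow_nonneg (by norm_num) _),
              ENNReal.ofReal_add (Real.rpow_nonneg (norm_nonneg _) _)
                (Real.rpow_nonneg (norm_nonneg _) _)]
    calc cost p (μ.prod ν)
        ≤ ∫⁻ z : E × E, ENNReal.ofReal (2 ^ p) *
            (ENNReal.ofReal (‖z.1‖ ^ p) + ENNReal.ofReal (‖z.2‖ ^ p)) ∂(μ.prod ν) :=
          lintegral_mono hpt
      _ = ENNReal.ofReal (2 ^ p) * (ENNReal.ofReal (∫ x, ‖x‖ ^ p ∂μ)
            + ENNReal.ofReal (∫ x, ‖x‖ ^ p ∂ν)) := by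
          have hm1 : Measurable fun x : E => ENNReal.ofReal (‖x‖ ^ p) :=
            ENNReal.measurable_ofReal.comp
              ((Real.continuous_rpow_const hp0).measurable.comp measurable_norm)
          have hmf : Measurable fun z : E × E => ENNReal.ofReal (‖z.1‖ ^ p) :=
            hm1.comp measurable_fst
          have hms : Measurable fun z : E × E => ENNReal.ofReal (‖z.2‖ ^ p) :=
            hm1.comp measurable_snd
          have hm2 : Measurable fun z : E × E =>
              ENNReal.ofReal (‖z.1‖ ^ p) + ENNReal.ofReal (‖z.2‖ ^ p) := hmf.add hms
          have hfst : ∫⁻ z : E × E, ENNReal.ofReal (‖z.1‖ ^ p) ∂(μ.prod ν) =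
              ∫⁻ x, ENNReal.ofReal (‖x‖ ^ p) ∂μ := by
            rw [MeasureTheory.lintegral_prod _ hmf.aemeasurable]
            simp
          have hsnd : ∫⁻ z : E × E, ENNReal.ofReal (‖z.2‖ ^ p) ∂(μ.prod ν) =
              ∫⁻ x, ENNReal.ofReal (‖x‖ ^ p) ∂ν := by
            rw [MeasureTheory.lintegral_prod _ hms.aemeasurable]
            simp
          rw [lintegral_const_mul _ hm2, lintegral_add_left hmf, hfst, hsnd,
            lintegral_ofReal_norm_rpow μ hμ, lintegral_ofReal_norm_rpow ν hν]
  have hfin : cost p (μ.prod ν) ≠ ⊤ :=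
    ne_top_of_le_ne_top (by finiteness) hbound
  have := Wp_le_cost hp0 h1 h2
  intro htop
  rw [htop] at this
  exact (ENNReal.rpow_lt_top_of_nonneg (by positivity) hfin).ne
    (top_le_iff.mp this)

lemma iInf₂_rpow {ι : Sort*} {S : ι → Prop} (c : ι → ℝ≥0∞) {r : ℝ} (hr : 0 < r) :
    (⨅ i, ⨅ (_ : S i), c i) ^ r = ⨅ i, ⨅ (_ : S i), (c i) ^ r := by
  have h := (ENNReal.orderIsoRpow r hr).map_iInf fun i => ⨅ (_ : S i), c i
  simp only [ENNReal.orderIsoRpow_apply] at h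
  rw [h]
  refine iInf_congr fun i => ?_
  have h2 := (ENNReal.orderIsoRpow r hr).map_iInf fun _ : S i => c i
  simp only [ENNReal.orderIsoRpow_apply] at h2
  exact h2

/-- Gluing step for the triangle inequality, on `ℝ`. -/
lemma Wp_le_add_cost {p : ℝ} (hp : 1 ≤ p) (μ₁ μ₂ μ₃ : Measure ℝ)
    [IsProbabilityMeasure μ₁] [IsProbabilityMeasure μ₂] [IsProbabilityMeasure μ₃]
    (π₁₂ π₂₃ : Measure (ℝ × ℝ))
    (h1 : Measure.map Prod.fst π₁₂ = μ₁) (h2 : Measure.map Prod.snd π₁₂ = μ₂)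
    (h3 : Measure.map Prod.fst π₂₃ = μ₂) (h4 : Measure.map Prod.snd π₂₃ = μ₃) :
    Wp p μ₁ μ₃ ≤ cost p π₁₂ ^ (1 / p) + cost p π₂₃ ^ (1 / p) := by
  classical
  have hp0 : (0 : ℝ) ≤ p := zero_le_one.trans hp
  haveI : IsProbabilityMeasure π₁₂ := by
    constructor
    have := congrArg (fun m : Measure ℝ => m Set.univ) h2
    simpa [Measure.map_apply measurable_snd MeasurableSet.univ] using this
  haveI : IsProbabilityMeasure π₂₃ := by
    constructor
    have := congrArg (fun m : Measure ℝ => m Set.univ) h4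
    simpa [Measure.map_apply measurable_snd MeasurableSet.univ] using this
  set π₂₁ : Measure (ℝ × ℝ) := π₁₂.map Prod.swap with hπ₂₁
  haveI : IsProbabilityMeasure π₂₁ := Measure.isProbabilityMeasure_map measurable_swap.aemeasurable
  have hfst : π₂₁.fst = μ₂ := by
    rw [Measure.fst, hπ₂₁, Measure.map_map measurable_fst measurable_swap]
    exact h2
  have hsnd : Measure.map Prod.snd π₂₁ = μ₁ := by
    rw [hπ₂₁, Measure.map_map measurable_snd measurable_swap]
    exact h1
  set κ : ProbabilityTheory.Kernel ℝ ℝ := π₂₁.condKernel with hκ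
  have hdis : μ₂ ⊗ₘ κ = π₂₁ := by
    rw [hκ, ← hfst]
    exact π₂₁.disintegrate _
  set κ' : ProbabilityTheory.Kernel (ℝ × ℝ) ℝ := κ.comap Prod.fst measurable_fst with hκ'
  haveI : ProbabilityTheory.IsMarkovKernel κ' := by
    rw [hκ']; infer_instance
  set τ : Measure ((ℝ × ℝ) × ℝ) := π₂₃ ⊗ₘ κ' with hτ
  -- the glued plan between μ₁ and μ₃
  have hS : Measurable fun w : (ℝ × ℝ) × ℝ => (w.2, w.1.2) :=
    measurable_snd.prodMk (measurable_snd.comp measurable_fst)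
  have hm1 : Measure.map Prod.fst (τ.map fun w => (w.2, w.1.2)) = μ₁ := by
    rw [Measure.map_map measurable_fst hS]
    have : (Prod.fst ∘ fun w : (ℝ × ℝ) × ℝ => (w.2, w.1.2)) = Prod.snd := rfl
    rw [this]
    ext s hs
    rw [Measure.map_apply measurable_snd hs, hτ,
      Measure.compProd_apply (measurable_snd hs)]
    have heq : ∀ a : ℝ × ℝ, κ' a (Prod.mk a ⁻¹' (Prod.snd ⁻¹' s)) = κ a.1 s := by
      intro a; rfl
    simp_rw [heq]
    have : ∫⁻ a : ℝ × ℝ, κ a.1 s ∂π₂₃ = ∫⁻ y, κ y s ∂μ₂ := by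
      rw [← h3, lintegral_map (κ.measurable_coe hs) measurable_fst]
    rw [this, ← hsnd, Measure.map_apply measurable_snd hs, ← hdis,
      Measure.compProd_apply (measurable_snd hs)]
    rfl
  have hm3 : Measure.map Prod.snd (τ.map fun w => (w.2, w.1.2)) = μ₃ := by
    rw [Measure.map_map measurable_snd hS]
    have : (Prod.snd ∘ fun w : (ℝ × ℝ) × ℝ => (w.2, w.1.2)) =
        Prod.snd ∘ (Prod.fst : (ℝ × ℝ) × ℝ → ℝ × ℝ) := rfl
    rw [this, ← Measure.map_map measurable_snd measurable_fst]
    have : Measure.map Prod.fst τ = π₂₃ := by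
      have := Measure.fst_compProd π₂₃ κ'
      rwa [Measure.fst] at this
    rw [this, h4]
  refine le_trans (Wp_le_cost hp0 hm1 hm3) ?_
  -- now estimate the cost of the glued plan
  have hcost : cost p (τ.map fun w => (w.2, w.1.2)) =
      ∫⁻ w : (ℝ × ℝ) × ℝ, ENNReal.ofReal (‖w.2 - w.1.2‖ ^ p) ∂τ := by
    rw [cost, lintegral_map (measurable_cost_integrand hp0) hS]
  set Ff : (ℝ × ℝ) × ℝ → ℝ≥0∞ := fun w => ENNReal.ofReal ‖w.2 - w.1.1‖ with hFf
  set Gg : (ℝ × ℝ) × ℝ → ℝ≥0∞ := fun w => ENNReal.ofReal ‖w.1.1 - w.1.2‖ with hGg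
  have hFm : Measurable Ff :=
    ENNReal.measurable_ofReal.comp (measurable_snd.sub
      (measurable_fst.comp measurable_fst)).norm
  have hGm : Measurable Gg :=
    ENNReal.measurable_ofReal.comp ((measurable_fst.comp measurable_fst).sub
      (measurable_snd.comp measurable_fst)).norm
  have hpt : ∀ w : (ℝ × ℝ) × ℝ, ENNReal.ofReal (‖w.2 - w.1.2‖ ^ p) ≤ (Ff w + Gg w) ^ p := by
    intro w
    rw [← ENNReal.ofReal_rpow_of_nonneg (norm_nonneg _) hp0]
    refine ENNReal.rpow_le_rpow ?_ hp0
    rw [hFf, hGg]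
    rw [← ENNReal.ofReal_add (norm_nonneg _) (norm_nonneg _)]
    refine ENNReal.ofReal_le_ofReal ?_
    have : w.2 - w.1.2 = (w.2 - w.1.1) + (w.1.1 - w.1.2) := by ring
    rw [this]
    exact norm_add_le _ _
  have hmain : (∫⁻ w, ENNReal.ofReal (‖w.2 - w.1.2‖ ^ p) ∂τ) ^ (1 / p) ≤
      (∫⁻ w, Ff w ^ p ∂τ) ^ (1 / p) + (∫⁻ w, Gg w ^ p ∂τ) ^ (1 / p) := by
    refine le_trans ?_ (ENNReal.lintegral_Lp_add_le hFm.aemeasurable hGm.aemeasurable hp)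
    exact ENNReal.rpow_le_rpow (lintegral_mono hpt) (by positivity)
  -- identify the two costs
  have hF : ∫⁻ w, Ff w ^ p ∂τ = cost p π₁₂ := by
    have hint : Measurable fun w : (ℝ × ℝ) × ℝ => ENNReal.ofReal (‖w.2 - w.1.1‖ ^ p) :=
      ENNReal.measurable_ofReal.comp ((Real.continuous_rpow_const hp0).measurable.comp
        (measurable_snd.sub (measurable_fst.comp measurable_fst)).norm)
    have h2int : Measurable fun z : ℝ × ℝ => ENNReal.ofReal (‖z.2 - z.1‖ ^ p) :=
      ENNReal.measurable_ofReal.comp ((Real.continuous_rpow_const hp0).measurable.comp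
        (measurable_snd.sub measurable_fst).norm)
    have hFeq : ∀ w : (ℝ × ℝ) × ℝ, Ff w ^ p = ENNReal.ofReal (‖w.2 - w.1.1‖ ^ p) := by
      intro w
      rw [hFf, ENNReal.ofReal_rpow_of_nonneg (norm_nonneg _) hp0]
    simp_rw [hFeq]
    rw [hτ, Measure.lintegral_compProd hint]
    have hin : ∀ a : ℝ × ℝ, (∫⁻ b, ENNReal.ofReal (‖b - a.1‖ ^ p) ∂(κ' a)) =
        (fun y => ∫⁻ b, ENNReal.ofReal (‖b - y‖ ^ p) ∂(κ y)) a.1 := fun a => rfl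
    simp_rw [hin]
    have hmeas : Measurable fun y : ℝ => ∫⁻ b, ENNReal.ofReal (‖b - y‖ ^ p) ∂(κ y) := by
      refine Measurable.lintegral_kernel_prod_right ?_
      exact ENNReal.measurable_ofReal.comp ((Real.continuous_rpow_const hp0).measurable.comp
        (measurable_snd.sub measurable_fst).norm)
    rw [← lintegral_map hmeas measurable_fst, h3]
    have : ∫⁻ y, (∫⁻ b, ENNReal.ofReal (‖b - y‖ ^ p) ∂(κ y)) ∂μ₂ =
        ∫⁻ z : ℝ × ℝ, ENNReal.ofReal (‖z.2 - z.1‖ ^ p) ∂(μ₂ ⊗ₘ κ) := by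
      rw [Measure.lintegral_compProd h2int]
    rw [this, hdis, hπ₂₁, lintegral_map h2int measurable_swap]
    rfl
  have hG : ∫⁻ w, Gg w ^ p ∂τ = cost p π₂₃ := by
    have hint : Measurable fun w : (ℝ × ℝ) × ℝ => ENNReal.ofReal (‖w.1.1 - w.1.2‖ ^ p) :=
      ENNReal.measurable_ofReal.comp ((Real.continuous_rpow_const hp0).measurable.comp
        ((measurable_fst.comp measurable_fst).sub (measurable_snd.comp measurable_fst)).norm)
    have hGeq : ∀ w : (ℝ × ℝ) × ℝ, Gg w ^ p = ENNReal.ofReal (‖w.1.1 - w.1.2‖ ^ p) := by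
      intro w
      rw [hGg, ENNReal.ofReal_rpow_of_nonneg (norm_nonneg _) hp0]
    simp_rw [hGeq]
    rw [hτ, Measure.lintegral_compProd hint]
    simp [cost]
  rw [hcost] at *
  rw [← hF, ← hG]
  exact hmain

/-- Triangle inequality for `Wp` on `ℝ`. -/
lemma Wp_triangle {p : ℝ} (hp : 1 ≤ p) (μ₁ μ₂ μ₃ : Measure ℝ)
    [IsProbabilityMeasure μ₁] [IsProbabilityMeasure μ₂] [IsProbabilityMeasure μ₃] :
    Wp p μ₁ μ₃ ≤ Wp p μ₁ μ₂ + Wp p μ₂ μ₃ := by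
  have hp0 : (0 : ℝ) < p := lt_of_lt_of_le zero_lt_one hp
  have hrp : (0 : ℝ) < 1 / p := by positivity
  rw [Wp_eq (μ := μ₁) (ν := μ₂), Wp_eq (μ := μ₂) (ν := μ₃)]
  rw [iInf₂_rpow _ hrp, iInf₂_rpow _ hrp]
  rw [ENNReal.iInf_add]
  refine le_iInf fun π₁₂ => ?_
  rw [ENNReal.iInf_add]
  refine le_iInf fun h12 => ?_
  rw [ENNReal.add_iInf]
  refine le_iInf fun π₂₃ => ?_
  rw [ENNReal.add_iInf]
  refine le_iInf fun h23 => ?_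
  exact Wp_le_add_cost hp μ₁ μ₂ μ₃ π₁₂ π₂₃ h12.1 h12.2 h23.1 h23.2

/-- Mean value bound for `rpow`. -/
lemma rpow_sub_rpow_le {p : ℝ} (hp : 1 ≤ p) {a b W : ℝ} (hb : 0 ≤ b) (hba : b ≤ a)
    (haW : a ≤ W) : a ^ p - b ^ p ≤ p * W ^ (p - 1) * (a - b) := by
  have hp0 : (0 : ℝ) ≤ p := zero_le_one.trans hp
  rcases eq_or_lt_of_le hba with h | h
  · rw [← h]; simp
  · obtain ⟨c, hc, hc'⟩ := exists_hasDerivAt_eq_slope (fun x => x ^ p)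
      (fun x => p * x ^ (p - 1)) h
      ((Real.continuous_rpow_const hp0).continuousOn)
      (fun x _ => Real.hasDerivAt_rpow_const (Or.inr hp))
    have hc0 : 0 ≤ c := hb.trans hc.1.le
    have heq : a ^ p - b ^ p = p * c ^ (p - 1) * (a - b) := by
      rw [eq_div_iff (sub_ne_zero.2 h.ne')] at hc'
      linarith [hc']
    have hcle : c ^ (p - 1) ≤ W ^ (p - 1) :=
      Real.rpow_le_rpow hc0 (hc.2.le.trans haW) (by linarith)
    have hab : 0 ≤ a - b := by linarith
    nlinarith [mul_nonneg (mul_nonneg hp0 hab) (sub_nonneg.2 hcle)]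

end SlicedAux

open SlicedAux

theorem sliced_wasserstein_cost_lipschitz {d : ℕ} (p : ℝ) (hp : 1 ≤ p)
    (μ ν : Measure (EuclideanSpace ℝ (Fin d)))
    [IsProbabilityMeasure μ] [IsProbabilityMeasure ν]
    (hmomμ : Integrable (fun z => ‖z‖ ^ p) μ)
    (hmomν : Integrable (fun z => ‖z‖ ^ p) ν)
    (θ₁ θ₂ : EuclideanSpace ℝ (Fin d)) (hθ₁ : ‖θ₁‖ = 1) (hθ₂ : ‖θ₂‖ = 1) :
    |WpR p (Measure.map (fun x => ⟪θ₁, x⟫) μ) (Measure.map (fun x => ⟪θ₁, x⟫) ν) ^ p -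
        WpR p (Measure.map (fun x => ⟪θ₂, x⟫) μ) (Measure.map (fun x => ⟪θ₂, x⟫) ν) ^ p| ≤
      p * WpR p μ ν ^ (p - 1) * (Mp p μ + Mp p ν) * ‖θ₁ - θ₂‖ := by
  classical
  have hp0 : (0 : ℝ) ≤ p := zero_le_one.trans hp
  have hppos : (0 : ℝ) < p := lt_of_lt_of_le zero_lt_one hp
  have hT : ∀ θ : (EuclideanSpace ℝ (Fin d)), Measurable fun x : (EuclideanSpace ℝ (Fin d)) => ⟪θ, x⟫ := fun θ =>
    Measurable.inner measurable_const measurable_id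
  -- 1-Lipschitz property of unit projections
  have hLip : ∀ θ : (EuclideanSpace ℝ (Fin d)), ‖θ‖ = 1 → ∀ x y : (EuclideanSpace ℝ (Fin d)), ‖(⟪θ, x⟫ : ℝ) - ⟪θ, y⟫‖ ≤ ‖x - y‖ := by
    intro θ hθ x y
    rw [← inner_sub_right, Real.norm_eq_abs]
    calc |⟪θ, x - y⟫| ≤ ‖θ‖ * ‖x - y‖ := abs_real_inner_le_norm θ (x - y)
      _ = ‖x - y‖ := by rw [hθ, one_mul]
  -- moments are nonnegative
  have hMp : ∀ ρ : Measure (EuclideanSpace ℝ (Fin d)), 0 ≤ Mp p ρ := fun ρ =>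
    Real.rpow_nonneg (integral_nonneg fun x => Real.rpow_nonneg (norm_nonneg _) _) _
  -- cross bound : Wp between two projections of the same measure
  have cross : ∀ (ρ : Measure (EuclideanSpace ℝ (Fin d))), Integrable (fun x => ‖x‖ ^ p) ρ → ∀ η η' : (EuclideanSpace ℝ (Fin d)),
      Wp p (ρ.map fun x => ⟪η, x⟫) (ρ.map fun x => ⟪η', x⟫) ≤
        ENNReal.ofReal (‖η - η'‖ * Mp p ρ) := by
    intro ρ hmom η η'
    refine (Wp_map_le hp0 ρ (hT η) (hT η')).trans ?_
    have hbd : ∫⁻ x, ENNReal.ofReal (‖(⟪η, x⟫ : ℝ) - ⟪η', x⟫‖ ^ p) ∂ρ ≤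
        ENNReal.ofReal (‖η - η'‖ ^ p) * ENNReal.ofReal (∫ x, ‖x‖ ^ p ∂ρ) := by
      have hpt : ∀ x : (EuclideanSpace ℝ (Fin d)), ENNReal.ofReal (‖(⟪η, x⟫ : ℝ) - ⟪η', x⟫‖ ^ p) ≤
          ENNReal.ofReal (‖η - η'‖ ^ p) * ENNReal.ofReal (‖x‖ ^ p) := by
        intro x
        have h1 : ‖(⟪η, x⟫ : ℝ) - ⟪η', x⟫‖ ≤ ‖η - η'‖ * ‖x‖ := by
          rw [← inner_sub_left, Real.norm_eq_abs]
          exact abs_real_inner_le_norm (η - η') x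
        have h2 : ‖(⟪η, x⟫ : ℝ) - ⟪η', x⟫‖ ^ p ≤ (‖η - η'‖ * ‖x‖) ^ p :=
          Real.rpow_le_rpow (norm_nonneg _) h1 hp0
        have h3 : (‖η - η'‖ * ‖x‖) ^ p = ‖η - η'‖ ^ p * ‖x‖ ^ p :=
          Real.mul_rpow (norm_nonneg _) (norm_nonneg _)
        calc ENNReal.ofReal (‖(⟪η, x⟫ : ℝ) - ⟪η', x⟫‖ ^ p)
            ≤ ENNReal.ofReal (‖η - η'‖ ^ p * ‖x‖ ^ p) :=
              ENNReal.ofReal_le_ofReal (h3 ▸ h2)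
          _ = ENNReal.ofReal (‖η - η'‖ ^ p) * ENNReal.ofReal (‖x‖ ^ p) :=
              ENNReal.ofReal_mul (Real.rpow_nonneg (norm_nonneg _) _)
      have hm1 : Measurable fun x : (EuclideanSpace ℝ (Fin d)) => ENNReal.ofReal (‖x‖ ^ p) :=
        ENNReal.measurable_ofReal.comp
          ((Real.continuous_rpow_const hp0).measurable.comp measurable_norm)
      calc ∫⁻ x, ENNReal.ofReal (‖(⟪η, x⟫ : ℝ) - ⟪η', x⟫‖ ^ p) ∂ρ
          ≤ ∫⁻ x, ENNReal.ofReal (‖η - η'‖ ^ p) * ENNReal.ofReal (‖x‖ ^ p) ∂ρ :=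
            lintegral_mono hpt
        _ = ENNReal.ofReal (‖η - η'‖ ^ p) * ∫⁻ x, ENNReal.ofReal (‖x‖ ^ p) ∂ρ :=
            lintegral_const_mul _ hm1
        _ = ENNReal.ofReal (‖η - η'‖ ^ p) * ENNReal.ofReal (∫ x, ‖x‖ ^ p ∂ρ) := by
            rw [lintegral_ofReal_norm_rpow ρ hmom]
    refine le_trans (ENNReal.rpow_le_rpow hbd (by positivity)) ?_
    have hI : (0:ℝ) ≤ ∫ x, ‖x‖ ^ p ∂ρ :=
      integral_nonneg fun x => Real.rpow_nonneg (norm_nonneg _) _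
    rw [← ENNReal.ofReal_mul (Real.rpow_nonneg (norm_nonneg _) _),
      ENNReal.ofReal_rpow_of_nonneg
        (mul_nonneg (Real.rpow_nonneg (norm_nonneg _) _) hI)
        (by positivity : (0:ℝ) ≤ 1 / p)]
    refine le_of_eq (congrArg ENNReal.ofReal ?_)
    rw [Real.mul_rpow (Real.rpow_nonneg (norm_nonneg _) _) hI,
      ← Real.rpow_mul (norm_nonneg _), mul_one_div_cancel hppos.ne', Real.rpow_one]
    simp only [Mp]
  -- contraction bounds
  have hcontr : ∀ θ : (EuclideanSpace ℝ (Fin d)), ‖θ‖ = 1 →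
      Wp p (μ.map fun x => ⟪θ, x⟫) (ν.map fun x => ⟪θ, x⟫) ≤ Wp p μ ν := fun θ hθ =>
    Wp_contract hp0 (hT θ) (hLip θ hθ) μ ν
  have hWtop : Wp p μ ν ≠ ⊤ := Wp_ne_top hp μ ν hmomμ hmomν
  haveI : IsProbabilityMeasure (μ.map fun x : (EuclideanSpace ℝ (Fin d)) => ⟪θ₁, x⟫) :=
    Measure.isProbabilityMeasure_map (hT θ₁).aemeasurable
  haveI : IsProbabilityMeasure (μ.map fun x : (EuclideanSpace ℝ (Fin d)) => ⟪θ₂, x⟫) :=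
    Measure.isProbabilityMeasure_map (hT θ₂).aemeasurable
  haveI : IsProbabilityMeasure (ν.map fun x : (EuclideanSpace ℝ (Fin d)) => ⟪θ₁, x⟫) :=
    Measure.isProbabilityMeasure_map (hT θ₁).aemeasurable
  haveI : IsProbabilityMeasure (ν.map fun x : (EuclideanSpace ℝ (Fin d)) => ⟪θ₂, x⟫) :=
    Measure.isProbabilityMeasure_map (hT θ₂).aemeasurable
  set A₁ : ℝ≥0∞ := Wp p (μ.map fun x : (EuclideanSpace ℝ (Fin d)) => ⟪θ₁, x⟫) (ν.map fun x : (EuclideanSpace ℝ (Fin d)) => ⟪θ₁, x⟫) with hA₁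
  set A₂ : ℝ≥0∞ := Wp p (μ.map fun x : (EuclideanSpace ℝ (Fin d)) => ⟪θ₂, x⟫) (ν.map fun x : (EuclideanSpace ℝ (Fin d)) => ⟪θ₂, x⟫) with hA₂
  have hA₁W : A₁ ≤ Wp p μ ν := hcontr θ₁ hθ₁
  have hA₂W : A₂ ≤ Wp p μ ν := hcontr θ₂ hθ₂
  have hA₁top : A₁ ≠ ⊤ := ne_top_of_le_ne_top hWtop hA₁W
  have hA₂top : A₂ ≠ ⊤ := ne_top_of_le_ne_top hWtop hA₂W
  have hnorm21 : ‖θ₂ - θ₁‖ = ‖θ₁ - θ₂‖ := norm_sub_rev _ _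
  -- ENNReal triangle bounds
  have htri₁ : A₁ ≤ ENNReal.ofReal (‖θ₁ - θ₂‖ * Mp p μ) + A₂
      + ENNReal.ofReal (‖θ₁ - θ₂‖ * Mp p ν) := by
    calc A₁ ≤ Wp p (μ.map fun x : (EuclideanSpace ℝ (Fin d)) => ⟪θ₁, x⟫) (μ.map fun x : (EuclideanSpace ℝ (Fin d)) => ⟪θ₂, x⟫)
          + Wp p (μ.map fun x : (EuclideanSpace ℝ (Fin d)) => ⟪θ₂, x⟫) (ν.map fun x : (EuclideanSpace ℝ (Fin d)) => ⟪θ₁, x⟫) :=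
        Wp_triangle hp _ _ _
      _ ≤ Wp p (μ.map fun x : (EuclideanSpace ℝ (Fin d)) => ⟪θ₁, x⟫) (μ.map fun x : (EuclideanSpace ℝ (Fin d)) => ⟪θ₂, x⟫)
          + (A₂ + Wp p (ν.map fun x : (EuclideanSpace ℝ (Fin d)) => ⟪θ₂, x⟫) (ν.map fun x : (EuclideanSpace ℝ (Fin d)) => ⟪θ₁, x⟫)) :=
        add_le_add_right (Wp_triangle hp _ _ _) _
      _ ≤ ENNReal.ofReal (‖θ₁ - θ₂‖ * Mp p μ)
          + (A₂ + ENNReal.ofReal (‖θ₁ - θ₂‖ * Mp p ν)) := by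
        refine add_le_add (cross μ hmomμ θ₁ θ₂) (add_le_add_right ?_ _)
        have := cross ν hmomν θ₂ θ₁
        rwa [hnorm21] at this
      _ = ENNReal.ofReal (‖θ₁ - θ₂‖ * Mp p μ) + A₂
          + ENNReal.ofReal (‖θ₁ - θ₂‖ * Mp p ν) := by rw [add_assoc]
  have htri₂ : A₂ ≤ ENNReal.ofReal (‖θ₁ - θ₂‖ * Mp p μ) + A₁
      + ENNReal.ofReal (‖θ₁ - θ₂‖ * Mp p ν) := by
    calc A₂ ≤ Wp p (μ.map fun x : (EuclideanSpace ℝ (Fin d)) => ⟪θ₂, x⟫) (μ.map fun x : (EuclideanSpace ℝ (Fin d)) => ⟪θ₁, x⟫)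
          + Wp p (μ.map fun x : (EuclideanSpace ℝ (Fin d)) => ⟪θ₁, x⟫) (ν.map fun x : (EuclideanSpace ℝ (Fin d)) => ⟪θ₂, x⟫) :=
        Wp_triangle hp _ _ _
      _ ≤ Wp p (μ.map fun x : (EuclideanSpace ℝ (Fin d)) => ⟪θ₂, x⟫) (μ.map fun x : (EuclideanSpace ℝ (Fin d)) => ⟪θ₁, x⟫)
          + (A₁ + Wp p (ν.map fun x : (EuclideanSpace ℝ (Fin d)) => ⟪θ₁, x⟫) (ν.map fun x : (EuclideanSpace ℝ (Fin d)) => ⟪θ₂, x⟫)) :=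
        add_le_add_right (Wp_triangle hp _ _ _) _
      _ ≤ ENNReal.ofReal (‖θ₁ - θ₂‖ * Mp p μ)
          + (A₁ + ENNReal.ofReal (‖θ₁ - θ₂‖ * Mp p ν)) := by
        refine add_le_add ?_ (add_le_add_right (cross ν hmomν θ₁ θ₂) _)
        have := cross μ hmomμ θ₂ θ₁
        rwa [hnorm21] at this
      _ = ENNReal.ofReal (‖θ₁ - θ₂‖ * Mp p μ) + A₁
          + ENNReal.ofReal (‖θ₁ - θ₂‖ * Mp p ν) := by rw [add_assoc]
  -- pass to real numbers
  have hc₁ : (0:ℝ) ≤ ‖θ₁ - θ₂‖ * Mp p μ := mul_nonneg (norm_nonneg _) (hMp μ)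
  have hc₂ : (0:ℝ) ≤ ‖θ₁ - θ₂‖ * Mp p ν := mul_nonneg (norm_nonneg _) (hMp ν)
  have htoReal : ∀ (A B : ℝ≥0∞), B ≠ ⊤ →
      A ≤ ENNReal.ofReal (‖θ₁ - θ₂‖ * Mp p μ) + B + ENNReal.ofReal (‖θ₁ - θ₂‖ * Mp p ν) →
      A.toReal ≤ ‖θ₁ - θ₂‖ * Mp p μ + B.toReal + ‖θ₁ - θ₂‖ * Mp p ν := by
    intro A B hB h
    have hRtop : ENNReal.ofReal (‖θ₁ - θ₂‖ * Mp p μ) + B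
        + ENNReal.ofReal (‖θ₁ - θ₂‖ * Mp p ν) ≠ ⊤ := by finiteness
    have := ENNReal.toReal_mono hRtop h
    rwa [ENNReal.toReal_add (by finiteness) (by finiteness),
      ENNReal.toReal_add (by finiteness) hB, ENNReal.toReal_ofReal hc₁,
      ENNReal.toReal_ofReal hc₂] at this
  have hr₁ : A₁.toReal ≤ ‖θ₁ - θ₂‖ * Mp p μ + A₂.toReal + ‖θ₁ - θ₂‖ * Mp p ν :=
    htoReal A₁ A₂ hA₂top htri₁
  have hr₂ : A₂.toReal ≤ ‖θ₁ - θ₂‖ * Mp p μ + A₁.toReal + ‖θ₁ - θ₂‖ * Mp p ν :=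
    htoReal A₂ A₁ hA₁top htri₂
  have ha₁w : A₁.toReal ≤ WpR p μ ν := ENNReal.toReal_mono hWtop hA₁W
  have ha₂w : A₂.toReal ≤ WpR p μ ν := ENNReal.toReal_mono hWtop hA₂W
  have hWnn : (0:ℝ) ≤ WpR p μ ν := ENNReal.toReal_nonneg
  have hfac : (0:ℝ) ≤ p * WpR p μ ν ^ (p - 1) :=
    mul_nonneg hp0 (Real.rpow_nonneg hWnn _)
  show |A₁.toReal ^ p - A₂.toReal ^ p| ≤
      p * WpR p μ ν ^ (p - 1) * (Mp p μ + Mp p ν) * ‖θ₁ - θ₂‖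
  rcases le_total A₂.toReal A₁.toReal with hle | hle
  · have habs : |A₁.toReal ^ p - A₂.toReal ^ p| = A₁.toReal ^ p - A₂.toReal ^ p :=
      abs_of_nonneg (sub_nonneg.2 (Real.rpow_le_rpow ENNReal.toReal_nonneg hle hp0))
    have hkey := rpow_sub_rpow_le hp ENNReal.toReal_nonneg hle ha₁w
    have hdiff : A₁.toReal - A₂.toReal ≤ ‖θ₁ - θ₂‖ * Mp p μ + ‖θ₁ - θ₂‖ * Mp p ν := by
      linarith
    calc |A₁.toReal ^ p - A₂.toReal ^ p| = A₁.toReal ^ p - A₂.toReal ^ p := habs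
      _ ≤ p * WpR p μ ν ^ (p - 1) * (A₁.toReal - A₂.toReal) := hkey
      _ ≤ p * WpR p μ ν ^ (p - 1) * (‖θ₁ - θ₂‖ * Mp p μ + ‖θ₁ - θ₂‖ * Mp p ν) :=
        mul_le_mul_of_nonneg_left hdiff hfac
      _ = p * WpR p μ ν ^ (p - 1) * (Mp p μ + Mp p ν) * ‖θ₁ - θ₂‖ := by ring
  · have habs : |A₁.toReal ^ p - A₂.toReal ^ p| = A₂.toReal ^ p - A₁.toReal ^ p := by
      rw [abs_sub_comm]
      exact abs_of_nonneg (sub_nonneg.2 (Real.rpow_le_rpow ENNReal.toReal_nonneg hle hp0))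
    have hkey := rpow_sub_rpow_le hp ENNReal.toReal_nonneg hle ha₂w
    have hdiff : A₂.toReal - A₁.toReal ≤ ‖θ₁ - θ₂‖ * Mp p μ + ‖θ₁ - θ₂‖ * Mp p ν := by
      linarith
    calc |A₁.toReal ^ p - A₂.toReal ^ p| = A₂.toReal ^ p - A₁.toReal ^ p := habs
      _ ≤ p * WpR p μ ν ^ (p - 1) * (A₂.toReal - A₁.toReal) := hkey
      _ ≤ p * WpR p μ ν ^ (p - 1) * (‖θ₁ - θ₂‖ * Mp p μ + ‖θ₁ - θ₂‖ * Mp p ν) :=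
        mul_le_mul_of_nonneg_left hdiff hfac
      _ = p * WpR p μ ν ^ (p - 1) * (Mp p μ + Mp p ν) * ‖θ₁ - θ₂‖ := by ring
end

section
/- The bracketing entropy of Lip_{1,0}([-M,M]) with respect to the sup norm satisfies N_{[ ]}(ε, Lip_{1,0}([-M,M]), ‖·‖_∞) ≤ e^{(4M/ε)·log 2}, and moreover log N_{[ ]}(ε, Lip_{1,0}([-M,M]), ‖·‖_∞) = Θ(M/ε), i.e. there are positive constants c, C such that c·M/ε - C ≤ log N_{[ ]}(ε, Lip_{1,0}([-M,M]), ‖·‖_∞) ≤ C·M/ε for all small ε. -/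
open MeasureTheory Real
open scoped ENNReal

namespace BracketAux

noncomputable def grd (δ M : ℝ) (k : ℕ) : ℝ := min (k * δ) M

noncomputable def Gf (δ M : ℝ) (f : ℝ → ℝ) : ℕ → ℝ
  | 0 => 0
  | (k+1) => Gf δ M f k +
      (if k = 0 then 1 else
        if Gf δ M f k - f (grd δ M (k+1)) + (grd δ M (k+1) - grd δ M k) ≤ 2*δ then 1 else -1)
        * (grd δ M (k+1) - grd δ M k)

noncomputable def bf (δ M : ℝ) (f : ℝ → ℝ) (k : ℕ) : ℝ :=
  if k = 0 then 1 else
    if Gf δ M f k - f (grd δ M (k+1)) + (grd δ M (k+1) - grd δ M k) ≤ 2*δ then 1 else -1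

lemma Gf_succ (δ M : ℝ) (f : ℝ → ℝ) (k : ℕ) :
    Gf δ M f (k+1) = Gf δ M f k + bf δ M f k * (grd δ M (k+1) - grd δ M k) := rfl

lemma bf_eq_or (δ M : ℝ) (f : ℝ → ℝ) (k : ℕ) : bf δ M f k = 1 ∨ bf δ M f k = -1 := by
  unfold bf; split_ifs <;> simp

noncomputable def slp (n : ℕ) (v : Fin n → Bool) (k : ℕ) : ℝ :=
  if h : 1 ≤ k ∧ k ≤ n then (if v ⟨k - 1, by omega⟩ then 1 else -1) else 1

noncomputable def Gv (δ M : ℝ) (n : ℕ) (v : Fin n → Bool) : ℕ → ℝ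
  | 0 => 0
  | (k+1) => Gv δ M n v k + slp n v k * (grd δ M (k+1) - grd δ M k)

noncomputable def kk (δ M : ℝ) (y : ℝ) : ℕ := min ⌊y/δ⌋₊ (⌈M/δ⌉₊ - 1)

noncomputable def gfun (δ M : ℝ) (n : ℕ) (v : Fin n → Bool) (y : ℝ) : ℝ :=
  Gv δ M n v (kk δ M y) + slp n v (kk δ M y) * (y - grd δ M (kk δ M y))

noncomputable def vf (δ M : ℝ) (f : ℝ → ℝ) (n : ℕ) : Fin n → Bool :=
  fun i => decide (Gf δ M f (i+1) - f (grd δ M (i+2)) + (grd δ M (i+2) - grd δ M (i+1)) ≤ 2*δ)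

variable {δ M : ℝ}

lemma grd_zero (hM : 0 < M) : grd δ M 0 = 0 := by
  simp [grd, hM.le]

lemma grd_nonneg (hδ : 0 < δ) (hM : 0 < M) (k : ℕ) : 0 ≤ grd δ M k := by
  have : (0:ℝ) ≤ k * δ := by positivity
  exact le_min this hM.le

lemma grd_le (k : ℕ) : grd δ M k ≤ M := min_le_right _ _

lemma grd_mono (hδ : 0 < δ) {j k : ℕ} (h : j ≤ k) : grd δ M j ≤ grd δ M k := by
  apply min_le_min _ le_rfl
  have hjk : (j:ℝ) ≤ k := by exact_mod_cast h
  nlinarith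

lemma grd_step (hδ : 0 < δ) (k : ℕ) : grd δ M (k+1) - grd δ M k ≤ δ := by
  unfold grd
  rcases le_total ((k:ℝ)*δ) M with h | h
  · rw [min_eq_left h]
    have : min (((k:ℕ)+1:ℕ) * δ) M ≤ ((k:ℕ)+1:ℕ) * δ := min_le_left _ _
    push_cast at this ⊢
    nlinarith
  · rw [min_eq_right h]
    have h2 : min (((k:ℕ)+1:ℕ) * δ) M ≤ M := min_le_right _ _
    push_cast at h2 ⊢
    nlinarith

lemma grd_eq_M (hδ : 0 < δ) {k : ℕ} (h : ⌈M/δ⌉₊ ≤ k) : grd δ M k = M := by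
  have h1 : M/δ ≤ (⌈M/δ⌉₊ : ℝ) := Nat.le_ceil _
  have h2 : (⌈M/δ⌉₊ : ℝ) ≤ k := by exact_mod_cast h
  have : M ≤ k * δ := by
    rw [div_le_iff₀ hδ] at h1; nlinarith
  simp [grd, this]

lemma slp_vf_eq (hδ : 0 < δ) (f : ℝ → ℝ) {k : ℕ} (hk : k ≤ ⌈M/δ⌉₊ - 1) :
    slp (⌈M/δ⌉₊ - 1) (vf δ M f (⌈M/δ⌉₊ - 1)) k = bf δ M f k := by
  rcases Nat.eq_zero_or_pos k with rfl | hk1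
  · simp [slp, bf]
  · have h1 : 1 ≤ k ∧ k ≤ ⌈M/δ⌉₊ - 1 := ⟨hk1, hk⟩
    have hne : k ≠ 0 := by omega
    have hkk : (k - 1) + 1 = k := by omega
    have hkk2 : (k - 1) + 2 = k + 1 := by omega
    by_cases hc : Gf δ M f k - f (grd δ M (k+1)) + (grd δ M (k+1) - grd δ M k) ≤ 2*δ <;>
      simp [slp, bf, vf, hne, hkk, hkk2, hc, h1.1, h1.2]

lemma Gv_vf_eq (hδ : 0 < δ) (f : ℝ → ℝ) (k : ℕ) :
    Gv δ M (⌈M/δ⌉₊ - 1) (vf δ M f (⌈M/δ⌉₊ - 1)) k = Gf δ M f k := by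
  induction k with
  | zero => rfl
  | succ k ih =>
    rw [Gv, Gf_succ, ih]
    rcases le_or_gt k (⌈M/δ⌉₊ - 1) with h | h
    · rw [slp_vf_eq hδ f h]
    · have h1 : ⌈M/δ⌉₊ ≤ k := by omega
      have h2 : ⌈M/δ⌉₊ ≤ k + 1 := by omega
      rw [grd_eq_M hδ h1, grd_eq_M hδ h2]
      ring

lemma Gf_invariant (hδ : 0 < δ) (hM : 0 < M) (f : ℝ → ℝ) (hf0 : f 0 = 0)
    (hLip : ∀ x ∈ Set.Icc (0:ℝ) M, ∀ y ∈ Set.Icc (0:ℝ) M, |f x - f y| ≤ |x - y|) (k : ℕ) :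
    0 ≤ Gf δ M f k - f (grd δ M k) ∧ Gf δ M f k - f (grd δ M k) ≤ 2*δ := by
  induction k with
  | zero =>
    simp [Gf, grd_zero hM, hf0]
    positivity
  | succ k ih =>
    have hmem : ∀ j : ℕ, grd δ M j ∈ Set.Icc (0:ℝ) M :=
      fun j => ⟨grd_nonneg hδ hM j, grd_le j⟩
    have hstep0 : 0 ≤ grd δ M (k+1) - grd δ M k := by
      have := grd_mono (M := M) hδ (Nat.le_succ k); linarith
    have hstep : grd δ M (k+1) - grd δ M k ≤ δ := grd_step hδ k
    have habs : |f (grd δ M (k+1)) - f (grd δ M k)| ≤ |grd δ M (k+1) - grd δ M k| :=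
      hLip _ (hmem _) _ (hmem _)
    rw [abs_of_nonneg hstep0] at habs
    obtain ⟨hd1, hd2⟩ := abs_le.mp habs
    rw [Gf_succ]
    rcases Nat.eq_zero_or_pos k with rfl | hk1
    · have hb : bf δ M f 0 = 1 := by simp [bf]
      rw [hb]
      have h0 : Gf δ M f 0 = 0 := rfl
      rw [h0, grd_zero hM, hf0] at *
      constructor <;> nlinarith
    · have hne : k ≠ 0 := by omega
      by_cases hc : Gf δ M f k - f (grd δ M (k+1)) + (grd δ M (k+1) - grd δ M k) ≤ 2*δ
      · have hb : bf δ M f k = 1 := by simp [bf, hne, hc]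
        rw [hb]
        constructor <;> nlinarith [ih.1, ih.2]
      · have hb : bf δ M f k = -1 := by simp [bf, hne, hc]
        rw [hb]
        push_neg at hc
        constructor <;> nlinarith [ih.1, ih.2]

lemma kk_le (y : ℝ) : kk δ M y ≤ ⌈M/δ⌉₊ - 1 := min_le_right _ _

lemma grd_kk_le (hδ : 0 < δ) {y : ℝ} (hy : y ∈ Set.Icc (0:ℝ) M) :
    grd δ M (kk δ M y) ≤ y := by
  refine le_trans (min_le_left _ _) ?_
  have h1 : (kk δ M y : ℝ) ≤ ⌊y/δ⌋₊ := by
    exact_mod_cast min_le_left ⌊y/δ⌋₊ (⌈M/δ⌉₊ - 1)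
  have h2 : (⌊y/δ⌋₊ : ℝ) ≤ y / δ := Nat.floor_le (by
    have := hy.1; positivity)
  have h3 : (⌊y/δ⌋₊ : ℝ) * δ ≤ y := by
    rw [← le_div_iff₀ hδ]; exact h2
  nlinarith

lemma le_grd_kk_succ (hδ : 0 < δ) (hM : 0 < M) {y : ℝ} (hy : y ∈ Set.Icc (0:ℝ) M) :
    y ≤ grd δ M (kk δ M y + 1) := by
  have hK1 : 1 ≤ ⌈M/δ⌉₊ := Nat.ceil_pos.mpr (by positivity)
  rcases le_or_gt ⌊y/δ⌋₊ (⌈M/δ⌉₊ - 1) with h | h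
  · have hk : kk δ M y = ⌊y/δ⌋₊ := min_eq_left h
    rw [hk]
    apply le_min _ hy.2
    have h4 : y / δ < ⌊y/δ⌋₊ + 1 := Nat.lt_floor_add_one _
    have h5 : y < (⌊y/δ⌋₊ + 1 : ℝ) * δ := by
      rw [← div_lt_iff₀ hδ]; exact h4
    push_cast
    linarith
  · have hk : kk δ M y = ⌈M/δ⌉₊ - 1 := min_eq_right h.le
    rw [hk, grd_eq_M hδ (by omega)]
    exact hy.2

lemma oneSided (M ε : ℝ) (hM : 0 < M) (hε : 0 < ε) :
    ∃ n : ℕ, (n : ℝ) ≤ 2 * M / ε ∧ ∃ G : (Fin n → Bool) → ℝ → ℝ,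
      ∀ f : ℝ → ℝ, f 0 = 0 →
        (∀ x ∈ Set.Icc (0:ℝ) M, ∀ y ∈ Set.Icc (0:ℝ) M, |f x - f y| ≤ |x - y|) →
        ∃ v, ∀ y ∈ Set.Icc (0:ℝ) M, G v y - ε ≤ f y ∧ f y ≤ G v y := by
  have hδ : 0 < ε/2 := by linarith
  set δ := ε/2 with hδdef
  refine ⟨⌈M/δ⌉₊ - 1, ?_, gfun δ M (⌈M/δ⌉₊ - 1), ?_⟩
  · have h1 : (⌈M/δ⌉₊ : ℝ) < M/δ + 1 := Nat.ceil_lt_add_one (by positivity)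
    have hK1 : 1 ≤ ⌈M/δ⌉₊ := Nat.ceil_pos.mpr (by positivity)
    have h2 : ((⌈M/δ⌉₊ - 1 : ℕ) : ℝ) = (⌈M/δ⌉₊ : ℝ) - 1 := by
      have := Nat.cast_sub (R := ℝ) hK1
      push_cast at this ⊢
      linarith [this]
    rw [h2]
    have h3 : M/δ = 2*M/ε := by rw [hδdef]; ring
    linarith
  · intro f hf0 hLip
    refine ⟨vf δ M f _, fun y hy => ?_⟩
    set k := kk δ M y with hkdef
    have hg1 : grd δ M k ≤ y := grd_kk_le hδ hy
    have hg2 : y ≤ grd δ M (k+1) := le_grd_kk_succ hδ hM hy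
    have hgE : gfun δ M (⌈M/δ⌉₊ - 1) (vf δ M f (⌈M/δ⌉₊ - 1)) y
        = Gf δ M f k + bf δ M f k * (y - grd δ M k) := by
      rw [gfun, Gv_vf_eq hδ f, slp_vf_eq hδ f (kk_le y)]
    rw [hgE]
    have hmemk : grd δ M k ∈ Set.Icc (0:ℝ) M :=
      ⟨grd_nonneg hδ hM k, grd_le k⟩
    have hmemk1 : grd δ M (k+1) ∈ Set.Icc (0:ℝ) M :=
      ⟨grd_nonneg hδ hM (k+1), grd_le (k+1)⟩
    have inv_k := Gf_invariant hδ hM f hf0 hLip k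
    have inv_k1 := Gf_invariant hδ hM f hf0 hLip (k+1)
    have habs1 : |f y - f (grd δ M k)| ≤ y - grd δ M k := by
      have := hLip y hy _ hmemk
      rwa [abs_of_nonneg (show (0:ℝ) ≤ y - grd δ M k by linarith)] at this
    have habs2 : |f (grd δ M (k+1)) - f y| ≤ grd δ M (k+1) - y := by
      have := hLip _ hmemk1 y hy
      rwa [abs_of_nonneg (show (0:ℝ) ≤ grd δ M (k+1) - y by linarith)] at this
    obtain ⟨ha1, ha2⟩ := abs_le.mp habs1
    obtain ⟨hb1, hb2⟩ := abs_le.mp habs2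
    have hsucc := Gf_succ δ M f k
    have hεδ : ε = 2*δ := by rw [hδdef]; ring
    rcases bf_eq_or δ M f k with hb | hb <;> rw [hb] at hsucc ⊢ <;>
      constructor <;> nlinarith [inv_k.1, inv_k.2, inv_k1.1, inv_k1.2]

end BracketAux


/-- The class of 1-Lipschitz functions on a set `A ⊆ ℝ` vanishing at `0`. -/
def Lip10 (A : Set ℝ) : Set (ℝ → ℝ) :=
  {f | f 0 = 0 ∧ ∀ x ∈ A, ∀ y ∈ A, |f x - f y| ≤ |x - y|}

/-- The `ε`-bracketing number of a class `F` of functions on `A ⊆ ℝ` with respect to the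
sup norm on `A`, as an extended nonnegative real (`⊤` if no finite bracketing cover exists). -/
noncomputable def bracketNum (A : Set ℝ) (F : Set (ℝ → ℝ)) (ε : ℝ) : ℝ≥0∞ :=
  sInf {c : ℝ≥0∞ | ∃ B : Finset ((ℝ → ℝ) × (ℝ → ℝ)), (B.card : ℝ≥0∞) = c ∧
    (∀ h ∈ F, ∃ b ∈ B, ∀ x ∈ A, b.1 x ≤ h x ∧ h x ≤ b.2 x) ∧
    (∀ b ∈ B, ∀ x ∈ A, b.2 x - b.1 x ≤ ε)}

lemma upperB (M ε : ℝ) (hM : 0 < M) (hε : 0 < ε) :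
    bracketNum (Set.Icc (-M) M) (Lip10 (Set.Icc (-M) M)) ε ≤
      ENNReal.ofReal (Real.exp (4 * M / ε * Real.log 2)) := by
  obtain ⟨n, hn, G, hG⟩ := BracketAux.oneSided M ε hM hε
  classical
  set B := (Finset.univ : Finset ((Fin n → Bool) × (Fin n → Bool))).image
    (fun p => ((fun x : ℝ => (if 0 ≤ x then G p.1 x else G p.2 (-x)) - ε),
               (fun x : ℝ => if 0 ≤ x then G p.1 x else G p.2 (-x)))) with hBdef
  have hsub : Set.Icc (0:ℝ) M ⊆ Set.Icc (-M) M := by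
    intro x hx; exact ⟨by linarith [hx.1], hx.2⟩
  have hmem : ((B.card : ℝ≥0∞)) ∈ {c : ℝ≥0∞ | ∃ B' : Finset ((ℝ → ℝ) × (ℝ → ℝ)),
      (B'.card : ℝ≥0∞) = c ∧
      (∀ h ∈ Lip10 (Set.Icc (-M) M), ∃ b ∈ B', ∀ x ∈ Set.Icc (-M) M,
        b.1 x ≤ h x ∧ h x ≤ b.2 x) ∧
      (∀ b ∈ B', ∀ x ∈ Set.Icc (-M) M, b.2 x - b.1 x ≤ ε)} := by
    refine ⟨B, rfl, ?_, ?_⟩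
    · rintro f ⟨hf0, hLip⟩
      obtain ⟨v1, hv1⟩ := hG f hf0 (fun x hx y hy => hLip x (hsub hx) y (hsub hy))
      obtain ⟨v2, hv2⟩ := hG (fun t => f (-t)) (by simpa using hf0)
        (by
          intro x hx y hy
          have := hLip (-x) ⟨by linarith [hx.2], by linarith [hx.1]⟩
            (-y) ⟨by linarith [hy.2], by linarith [hy.1]⟩
          calc |f (-x) - f (-y)| ≤ |(-x) - (-y)| := this
            _ = |x - y| := by rw [show (-x) - (-y) = -(x - y) by ring, abs_neg])
      refine ⟨_, Finset.mem_image_of_mem _ (Finset.mem_univ (v1, v2)), ?_⟩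
      intro x hx
      by_cases hx0 : 0 ≤ x
      · have := hv1 x ⟨hx0, hx.2⟩
        simpa [hx0] using this
      · have hmx : -x ∈ Set.Icc (0:ℝ) M := ⟨by linarith, by linarith [hx.1]⟩
        have := hv2 (-x) hmx
        simp only [neg_neg] at this
        simpa [hx0] using this
    · intro b hb x hx
      obtain ⟨p, -, rfl⟩ := Finset.mem_image.mp hb
      simp
  refine le_trans (sInf_le hmem) ?_
  have hcard : B.card ≤ 2 ^ n * 2 ^ n := by
    refine le_trans (Finset.card_image_le) ?_
    simp [Finset.card_univ]
  have hlog2 : (0:ℝ) < Real.log 2 := Real.log_pos (by norm_num)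
  have hpow : ((2:ℝ) ^ n * 2 ^ n) ≤ Real.exp (4 * M / ε * Real.log 2) := by
    have h2 : (2:ℝ) ^ n = Real.exp ((n:ℝ) * Real.log 2) := by
      rw [Real.exp_nat_mul, Real.exp_log two_pos]
    rw [h2, ← Real.exp_add]
    apply Real.exp_le_exp.mpr
    have key := mul_le_mul_of_nonneg_right hn hlog2.le
    have h5 : 2 * M / ε * Real.log 2 + 2 * M / ε * Real.log 2 = 4 * M / ε * Real.log 2 := by
      ring
    nlinarith [key, h5]
  calc (B.card : ℝ≥0∞) ≤ ((2 ^ n * 2 ^ n : ℕ) : ℝ≥0∞) := by exact_mod_cast hcard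
    _ = ENNReal.ofReal ((2:ℝ) ^ n * 2 ^ n) := by
        rw [← ENNReal.ofReal_natCast]; push_cast; ring_nf
    _ ≤ ENNReal.ofReal (Real.exp (4 * M / ε * Real.log 2)) :=
        ENNReal.ofReal_le_ofReal hpow

lemma lowerB (M ε : ℝ) (hM : 0 < M) (hε : 0 < ε) :
    ((2 ^ ⌊M/(3*ε)⌋₊ : ℕ) : ℝ≥0∞) ≤
      bracketNum (Set.Icc (-M) M) (Lip10 (Set.Icc (-M) M)) ε := by
  set m := ⌊M/(3*ε)⌋₊ with hmdef
  set Zs : (Fin m → Bool) → Set ℝ := fun σ =>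
    {z | ∀ k : Fin m, σ k = true → z ∉ Set.Ioo (3*ε*k) (3*ε*k + 3*ε)} with hZdef
  set F : (Fin m → Bool) → ℝ → ℝ := fun σ x => Metric.infDist x (Zs σ) with hFdef
  have h0mem : ∀ σ, (0:ℝ) ∈ Zs σ := by
    intro σ k hk hmem
    have h1 := hmem.1
    have hk0 : (0:ℝ) ≤ (k:ℕ) := Nat.cast_nonneg _
    nlinarith
  have hne : ∀ σ, (Zs σ).Nonempty := fun σ => ⟨0, h0mem σ⟩
  have hmemL : ∀ σ, F σ ∈ Lip10 (Set.Icc (-M) M) := by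
    intro σ
    refine ⟨Metric.infDist_zero_of_mem (h0mem σ), ?_⟩
    intro x _ y _
    have := LipschitzWith.dist_le_mul (Metric.lipschitz_infDist_pt (Zs σ)) x y
    simpa [Real.dist_eq] using this
  have hsm : 3 * ε * (m:ℝ) ≤ M := by
    have := Nat.floor_le (show (0:ℝ) ≤ M/(3*ε) by positivity)
    rw [← hmdef] at this
    rw [le_div_iff₀ (by positivity : (0:ℝ) < 3*ε)] at this
    nlinarith
  have hck_mem : ∀ k : Fin m, (3*ε*(k:ℕ) + 3*ε/2) ∈ Set.Icc (-M) M := by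
    intro k
    have hk : ((k:ℕ):ℝ) + 1 ≤ (m:ℝ) := by exact_mod_cast k.2
    constructor
    · have : (0:ℝ) ≤ 3*ε*(k:ℕ) := by positivity
      nlinarith
    · nlinarith
  have htrue : ∀ (σ) (k : Fin m), σ k = true → 3*ε/2 ≤ F σ (3*ε*(k:ℕ) + 3*ε/2) := by
    intro σ k hk
    by_contra hcon
    push_neg at hcon
    rw [hFdef] at hcon
    obtain ⟨z, hz, hdz⟩ := (Metric.infDist_lt_iff (hne σ)).mp hcon
    have := hz k hk
    rw [Real.dist_eq] at hdz
    have habs := abs_lt.mp hdz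
    exact this ⟨by linarith [habs.2], by linarith [habs.1]⟩
  have hfalse : ∀ (σ) (k : Fin m), σ k = false → F σ (3*ε*(k:ℕ) + 3*ε/2) = 0 := by
    intro σ k hk
    apply Metric.infDist_zero_of_mem
    intro j hj hmem
    have hjk : j ≠ k := by
      intro h; rw [h, hk] at hj; exact Bool.false_ne_true hj
    have hmem1 := hmem.1
    have hmem2 := hmem.2
    rcases lt_or_gt_of_ne (fun h => hjk (Fin.ext h) : (j:ℕ) ≠ (k:ℕ)) with h | h
    · have : ((j:ℕ):ℝ) + 1 ≤ ((k:ℕ):ℝ) := by exact_mod_cast h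
      nlinarith
    · have : ((k:ℕ):ℝ) + 1 ≤ ((j:ℕ):ℝ) := by exact_mod_cast h
      nlinarith
  apply le_sInf
  rintro c ⟨B, rfl, hcov, hwid⟩
  choose b hbB hbr using fun σ => hcov (F σ) (hmemL σ)
  have hinj : Set.InjOn b ↑(Finset.univ : Finset (Fin m → Bool)) := by
    intro σ1 _ σ2 _ heq
    by_contra hne2
    obtain ⟨k, hkne⟩ : ∃ k, σ1 k ≠ σ2 k := by
      by_contra hc; push_neg at hc; exact hne2 (funext hc)
    set x := 3*ε*(k:ℕ) + 3*ε/2 with hxdef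
    have hx : x ∈ Set.Icc (-M) M := hck_mem k
    have h1 := hbr σ1 x hx
    have h2 := hbr σ2 x hx
    rw [← heq] at h2
    have hw := hwid (b σ1) (hbB σ1) x hx
    have hgap : 3*ε/2 ≤ |F σ1 x - F σ2 x| := by
      rcases Bool.eq_false_or_eq_true (σ1 k) with hb1 | hb1 <;>
        rcases Bool.eq_false_or_eq_true (σ2 k) with hb2 | hb2
      · exact absurd (hb1.trans hb2.symm) hkne
      · have ht := htrue σ1 k hb1
        have hf := hfalse σ2 k hb2
        rw [hf]
        rw [abs_of_nonneg (by rw [sub_zero]; linarith [Metric.infDist_nonneg (x := x) (s := Zs σ1)])]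
        linarith
      · have ht := htrue σ2 k hb2
        have hf := hfalse σ1 k hb1
        rw [hf]
        rw [abs_sub_comm]
        rw [abs_of_nonneg (by rw [sub_zero]; linarith [Metric.infDist_nonneg (x := x) (s := Zs σ2)])]
        linarith
      · exact absurd (hb1.trans hb2.symm) hkne
    have hle : |F σ1 x - F σ2 x| ≤ ε :=
      abs_le.mpr ⟨by linarith [h1.1, h2.2, hw], by linarith [h1.2, h2.1, hw]⟩
    linarith [hgap, hle, hε]
  have hcard := Finset.card_le_card_of_injOn b (fun σ _ => hbB σ) hinj
  rw [Finset.card_univ] at hcard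
  have h2m : Fintype.card (Fin m → Bool) = 2 ^ m := by simp
  rw [h2m] at hcard
  exact_mod_cast hcard

theorem bracketNum_lip10_symm_Icc :
    (∀ M ε : ℝ, 0 < M → 0 < ε →
      bracketNum (Set.Icc (-M) M) (Lip10 (Set.Icc (-M) M)) ε ≤
        ENNReal.ofReal (Real.exp (4 * M / ε * Real.log 2))) ∧
    (∃ c C : ℝ, 0 < c ∧ 0 < C ∧ ∀ M : ℝ, 0 < M → ∃ ε₀ : ℝ, 0 < ε₀ ∧
      ∀ ε : ℝ, 0 < ε → ε < ε₀ →
        ENNReal.ofReal (Real.exp (c * M / ε - C)) ≤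
            bracketNum (Set.Icc (-M) M) (Lip10 (Set.Icc (-M) M)) ε ∧
          bracketNum (Set.Icc (-M) M) (Lip10 (Set.Icc (-M) M)) ε ≤
            ENNReal.ofReal (Real.exp (C * M / ε))) := by
  have hlog2 : (0:ℝ) < Real.log 2 := Real.log_pos (by norm_num)
  constructor
  · exact upperB
  · refine ⟨Real.log 2 / 4, 4 * Real.log 2, by positivity, by positivity, ?_⟩
    intro M hM
    refine ⟨1, one_pos, ?_⟩
    intro ε hε _
    constructor
    · have hm : M/(3*ε) - 1 ≤ (⌊M/(3*ε)⌋₊ : ℝ) := by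
        have := Nat.lt_floor_add_one (M/(3*ε))
        linarith
      have hexp : Real.exp (Real.log 2 / 4 * M / ε - 4 * Real.log 2) ≤
          (2:ℝ) ^ ⌊M/(3*ε)⌋₊ := by
        have h2 : (2:ℝ) ^ ⌊M/(3*ε)⌋₊ = Real.exp ((⌊M/(3*ε)⌋₊:ℝ) * Real.log 2) := by
          rw [Real.exp_nat_mul, Real.exp_log two_pos]
        rw [h2]
        apply Real.exp_le_exp.mpr
        have h3 : Real.log 2 / 4 * M / ε = 3*(M/(3*ε)) * Real.log 2 / 4 := by
          field_simp
        rw [h3]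
        have key := mul_le_mul_of_nonneg_right hm hlog2.le
        have hnn : (0:ℝ) ≤ M/(3*ε) * Real.log 2 :=
          mul_nonneg (by positivity) hlog2.le
        nlinarith [key, hnn]
      calc ENNReal.ofReal (Real.exp (Real.log 2 / 4 * M / ε - 4 * Real.log 2))
          ≤ ENNReal.ofReal ((2:ℝ) ^ ⌊M/(3*ε)⌋₊) := ENNReal.ofReal_le_ofReal hexp
        _ = ((2 ^ ⌊M/(3*ε)⌋₊ : ℕ) : ℝ≥0∞) := by
            rw [← ENNReal.ofReal_natCast]; push_cast; ring_nf
        _ ≤ _ := lowerB M ε hM hε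
    · have h4 : 4 * Real.log 2 * M / ε = 4 * M / ε * Real.log 2 := by ring
      rw [h4]
      exact upperB M ε hM hε
end

section
/- Let X be a random vector in ℝ^d with distribution μ and E‖X‖ < ∞, and define Y(θ,t) := P(θᵀX > t) - 1_{θᵀX > t} on S^{d-1} × ℝ. Then ‖Y‖_{L¹(S^{d-1}×ℝ, σ×m)} ≤ E‖X‖ + 4‖X‖ almost surely, where σ is the uniform distribution on S^{d-1} and m is Lebesgue measure. -/
open MeasureTheory
open scoped ENNReal RealInnerProductSpace

open Set in
lemma inner_bound' {Ω : Type*} [MeasurableSpace Ω] (μ : Measure Ω) [IsProbabilityMeasure μ]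
    (Z : Ω → ℝ) (hZm : Measurable Z) (hZi : Integrable Z μ) (a c : ℝ) (hac : |a| ≤ c) :
    (∫ t : ℝ, |(μ {ω' | Z ω' > t}).toReal - (if a > t then (1:ℝ) else 0)|) ≤
      (∫ ω', |Z ω'| ∂μ) + 2 * c := by
  have hc0 : 0 ≤ c := le_trans (abs_nonneg a) hac
  set F : ℝ → ℝ := fun t => (μ {ω' | Z ω' > t}).toReal with hF
  set G : ℝ → ℝ := fun t => (μ {ω' | Z ω' ≤ t}).toReal with hG
  have hFm : Measurable F :=
    Measurable.ennreal_toReal (Antitone.measurable fun s t hst =>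
      measure_mono fun x hx => lt_of_le_of_lt hst hx)
  have hGm : Measurable G :=
    Measurable.ennreal_toReal (Monotone.measurable fun s t hst =>
      measure_mono fun x hx => le_trans hx hst)
  have hF01 : ∀ t, 0 ≤ F t ∧ F t ≤ 1 := fun t =>
    ⟨ENNReal.toReal_nonneg, by
      simpa using ENNReal.toReal_mono ENNReal.one_ne_top (prob_le_one (μ := μ))⟩
  have hG0 : ∀ t, 0 ≤ G t := fun t => ENNReal.toReal_nonneg
  have hGF : ∀ t, G t = 1 - F t := by
    intro t
    have hset : {ω' | Z ω' ≤ t} = {ω' | Z ω' > t}ᶜ := by ext x; simp [not_lt]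
    rw [hG, hF]
    simp only [hset]
    rw [prob_compl_eq_one_sub (show MeasurableSet {ω' | Z ω' > t} from hZm measurableSet_Ioi),
      ENNReal.toReal_sub_of_le prob_le_one ENNReal.one_ne_top, ENNReal.toReal_one]
  set P : Ω → ℝ := fun ω' => max (Z ω') 0 with hP
  set N : Ω → ℝ := fun ω' => max (-Z ω') 0 with hN
  have hPi : Integrable P μ := hZi.pos_part
  have hNi : Integrable N μ := hZi.neg'.pos_part
  have hPnn : 0 ≤ᵐ[μ] P := Filter.Eventually.of_forall fun ω' => le_max_right _ _
  have hNnn : 0 ≤ᵐ[μ] N := Filter.Eventually.of_forall fun ω' => le_max_right _ _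
  have hsetP : ∀ t ∈ Ioi (0:ℝ), {ω' | t < P ω'} = {ω' | Z ω' > t} := by
    intro t ht
    ext x
    simp only [hP, mem_setOf_eq, lt_max_iff, gt_iff_lt]
    exact or_iff_left (not_lt.mpr (le_of_lt ht))
  have hsetN : ∀ t ∈ Ioi (0:ℝ), {ω' | t ≤ N ω'} = {ω' | Z ω' ≤ -t} := by
    intro t ht
    ext x
    simp only [hN, mem_setOf_eq, le_max_iff, le_neg]
    exact or_iff_left (not_le.mpr ht)
  have hFeq : ∫ t in Ioi (0:ℝ), F t = ∫ ω', P ω' ∂μ := by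
    rw [hPi.integral_eq_integral_meas_lt hPnn]
    exact setIntegral_congr_fun measurableSet_Ioi fun t ht => by
      rw [hF]; exact (congrArg (fun s => (μ s).toReal) (hsetP t ht)).symm
  have hFIoi : IntegrableOn F (Ioi (0:ℝ)) := by
    refine ⟨hFm.aestronglyMeasurable.restrict, ?_⟩
    rw [hasFiniteIntegral_iff_ofReal (Filter.Eventually.of_forall fun t => ENNReal.toReal_nonneg)]
    calc ∫⁻ t in Ioi (0:ℝ), ENNReal.ofReal (F t)
        ≤ ∫⁻ t in Ioi (0:ℝ), μ {ω' | Z ω' > t} := lintegral_mono fun t => ENNReal.ofReal_toReal_le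
      _ = ∫⁻ t in Ioi (0:ℝ), μ {ω' | t < P ω'} :=
          (setLIntegral_congr_fun measurableSet_Ioi (fun t (ht : t ∈ Ioi (0:ℝ)) =>
            (congrArg μ (hsetP t ht) : μ {ω' | t < P ω'} = μ {ω' | Z ω' > t}))).symm
      _ = ∫⁻ ω', ENNReal.ofReal (P ω') ∂μ :=
          (lintegral_eq_lintegral_meas_lt μ hPnn hPi.aemeasurable).symm
      _ < ⊤ := hPi.lintegral_lt_top
  have hGeq' : ∫ t in Ioi (0:ℝ), G (-t) = ∫ ω', N ω' ∂μ := by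
    rw [hNi.integral_eq_integral_meas_le hNnn]
    exact setIntegral_congr_fun measurableSet_Ioi fun t ht => by
      rw [hG]; exact (congrArg (fun s => (μ s).toReal) (hsetN t ht)).symm
  have hGIoi : IntegrableOn (fun t => G (-t)) (Ioi (0:ℝ)) := by
    refine ⟨(hGm.comp measurable_neg).aestronglyMeasurable.restrict, ?_⟩
    rw [hasFiniteIntegral_iff_ofReal (Filter.Eventually.of_forall fun t => ENNReal.toReal_nonneg)]
    calc ∫⁻ t in Ioi (0:ℝ), ENNReal.ofReal (G (-t))
        ≤ ∫⁻ t in Ioi (0:ℝ), μ {ω' | Z ω' ≤ -t} := lintegral_mono fun t => ENNReal.ofReal_toReal_le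
      _ = ∫⁻ t in Ioi (0:ℝ), μ {ω' | t ≤ N ω'} :=
          (setLIntegral_congr_fun measurableSet_Ioi (fun t (ht : t ∈ Ioi (0:ℝ)) =>
            (congrArg μ (hsetN t ht) : μ {ω' | t ≤ N ω'} = μ {ω' | Z ω' ≤ -t}))).symm
      _ = ∫⁻ ω', ENNReal.ofReal (N ω') ∂μ :=
          (lintegral_eq_lintegral_meas_le μ hNnn hNi.aemeasurable).symm
      _ < ⊤ := hNi.lintegral_lt_top
  have A : MeasurableEmbedding (fun x : ℝ => -x) :=
    (Homeomorph.neg ℝ).isClosedEmbedding.measurableEmbedding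
  have hmap : volume.restrict (Iic (0:ℝ)) = (volume.restrict (Ioi (0:ℝ))).map (fun x : ℝ => -x) := by
    have h1 : (fun x : ℝ => -x) ⁻¹' (Iic (0:ℝ)) = Ici (0:ℝ) := by
      ext x; simp
    rw [Measure.restrict_congr_set Ioi_ae_eq_Ici]
    conv_lhs => rw [← Measure.map_neg_eq_self (volume : Measure ℝ)]
    rw [Measure.restrict_map measurable_neg measurableSet_Iic, h1]
  have hGIic : IntegrableOn G (Iic (0:ℝ)) := by
    rw [IntegrableOn, hmap, A.integrable_map_iff]
    exact hGIoi
  have hGeq : ∫ t in Iic (0:ℝ), G t = ∫ ω', N ω' ∂μ := by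
    have := integral_comp_neg_Iic (0:ℝ) (fun s => G (-s))
    simp only [neg_neg, neg_zero] at this
    rw [this, hGeq']
  set h : ℝ → ℝ := fun t => if 0 < t then F t else G t with hh
  set I : ℝ → ℝ := Set.indicator (Icc (-c) c) (fun _ => (1:ℝ)) with hI
  have hInn : ∀ t, 0 ≤ I t := fun t => Set.indicator_nonneg (fun _ _ => zero_le_one) t
  have hhnn : ∀ t, 0 ≤ h t := fun t => by
    by_cases ht : 0 < t <;> simp [hh, ht, (hF01 t).1, hG0 t]
  have hpt : ∀ t, |F t - (if a > t then (1:ℝ) else 0)| ≤ h t + I t := by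
    intro t
    by_cases ht : 0 < t <;> by_cases hat : a > t
    · have htc : t ∈ Icc (-c) c :=
        ⟨by linarith, le_trans (le_of_lt hat) (le_trans (le_abs_self a) hac)⟩
      rw [if_pos hat, abs_of_nonpos (by linarith [(hF01 t).2])]
      have h1 : h t = F t := if_pos ht
      have h2 : I t = 1 := indicator_of_mem htc _
      have := (hF01 t).1
      linarith
    · rw [if_neg hat, sub_zero, abs_of_nonneg (hF01 t).1]
      have h1 : h t = F t := if_pos ht
      linarith [hInn t]
    · rw [if_pos hat, abs_of_nonpos (by linarith [(hF01 t).2])]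
      have h1 : h t = G t := if_neg ht
      rw [hGF t] at h1
      linarith [hInn t]
    · have htc : t ∈ Icc (-c) c :=
        ⟨le_trans (le_trans (neg_le_neg hac) (neg_abs_le a)) (not_lt.mp hat),
          le_trans (not_lt.mp ht) hc0⟩
      rw [if_neg hat, sub_zero, abs_of_nonneg (hF01 t).1]
      have h2 : I t = 1 := indicator_of_mem htc _
      linarith [(hF01 t).2, hhnn t]
  have hhIoi : IntegrableOn h (Ioi (0:ℝ)) :=
    hFIoi.congr_fun (fun t ht => (if_pos ht).symm) measurableSet_Ioi
  have hhIic : IntegrableOn h (Iic (0:ℝ)) :=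
    hGIic.congr_fun (fun t ht => (if_neg (not_lt.mpr ht)).symm) measurableSet_Iic
  have hhInt : Integrable h := by
    rw [← integrableOn_univ, ← Iic_union_Ioi (a := (0:ℝ))]
    exact hhIic.union hhIoi
  have hIInt : Integrable I := by
    rw [hI, integrable_indicator_iff measurableSet_Icc]
    exact integrableOn_const (by rw [Real.volume_Icc]; exact ENNReal.ofReal_ne_top)
  have hBInt : Integrable (fun t => h t + I t) := hhInt.add hIInt
  have hindm : Measurable (fun t : ℝ => if a > t then (1:ℝ) else 0) := by
    have heq : (fun t : ℝ => if a > t then (1:ℝ) else 0)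
        = Set.indicator (Iio a) (fun _ => (1:ℝ)) := by
      ext t; simp [Set.indicator_apply, mem_Iio]
    rw [heq]; exact measurable_const.indicator measurableSet_Iio
  have hInteg : Integrable (fun t => |F t - (if a > t then (1:ℝ) else 0)|) :=
    hBInt.mono' ((hFm.sub hindm).abs.aestronglyMeasurable)
      (Filter.Eventually.of_forall fun t => by rw [Real.norm_eq_abs, abs_abs]; exact hpt t)
  have hIval : (∫ t, I t) = 2 * c := by
    rw [hI, integral_indicator_const (1:ℝ) measurableSet_Icc, Real.volume_real_Icc_of_le (by linarith),
      sub_neg_eq_add, smul_eq_mul, mul_one, two_mul]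
  have hsplit : (∫ t, h t) = (∫ ω', N ω' ∂μ) + ∫ ω', P ω' ∂μ := by
    rw [← intervalIntegral.integral_Iic_add_Ioi hhIic hhIoi]
    congr 1
    · rw [← hGeq]
      exact setIntegral_congr_fun measurableSet_Iic fun t ht => if_neg (not_lt.mpr ht)
    · rw [← hFeq]
      exact setIntegral_congr_fun measurableSet_Ioi fun t ht => if_pos ht
  have hNP : (∫ ω', N ω' ∂μ) + ∫ ω', P ω' ∂μ = ∫ ω', |Z ω'| ∂μ := by
    rw [← integral_add hNi hPi]
    apply integral_congr_ae
    apply Filter.Eventually.of_forall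
    intro ω'
    simp only [hN, hP]
    rw [add_comm]
    exact max_zero_add_max_neg_zero_eq_abs_self (Z ω')
  calc (∫ t : ℝ, |F t - (if a > t then (1:ℝ) else 0)|)
      ≤ ∫ t, (h t + I t) := integral_mono hInteg hBInt hpt
    _ = (∫ t, h t) + ∫ t, I t := integral_add hhInt hIInt
    _ = (∫ ω', |Z ω'| ∂μ) + 2 * c := by rw [hIval, hsplit, hNP]



theorem L1_norm_Y_le {Ω : Type*} [MeasurableSpace Ω]
    (μ : Measure Ω) [IsProbabilityMeasure μ] {d : ℕ}
    (X : Ω → EuclideanSpace ℝ (Fin d)) (hX : Measurable X)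
    (hmom : Integrable (fun ω => ‖X ω‖) μ)
    (σ : Measure (EuclideanSpace ℝ (Fin d))) [IsProbabilityMeasure σ]
    (hσ : ∀ᵐ θ ∂σ, ‖θ‖ = 1) (ω : Ω) :
    (∫ θ, (∫ t : ℝ,
        |(μ {ω' | ⟪θ, X ω'⟫ > t}).toReal - (if ⟪θ, X ω⟫ > t then (1:ℝ) else 0)|) ∂σ) ≤
      (∫ ω', ‖X ω'‖ ∂μ) + 4 * ‖X ω‖ := by
  have hnn : 0 ≤ ∫ ω', ‖X ω'‖ ∂μ := integral_nonneg fun _ => norm_nonneg _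
  have hXω : (0:ℝ) ≤ ‖X ω‖ := norm_nonneg _
  set C : ℝ := (∫ ω', ‖X ω'‖ ∂μ) + 2 * ‖X ω‖ with hC
  have hbound : ∀ᵐ θ ∂σ, (∫ t : ℝ,
      |(μ {ω' | ⟪θ, X ω'⟫ > t}).toReal - (if ⟪θ, X ω⟫ > t then (1:ℝ) else 0)|) ≤ C := by
    filter_upwards [hσ] with θ hθ
    have hZm : Measurable fun ω' => ⟪θ, X ω'⟫ := Measurable.inner measurable_const hX
    have habs : ∀ ω', |⟪θ, X ω'⟫| ≤ ‖X ω'‖ := fun ω' => by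
      have := abs_real_inner_le_norm θ (X ω')
      rwa [hθ, one_mul] at this
    have hZi : Integrable (fun ω' => ⟪θ, X ω'⟫) μ :=
      hmom.mono' hZm.aestronglyMeasurable
        (Filter.Eventually.of_forall fun ω' => by rw [Real.norm_eq_abs]; exact habs ω')
    calc (∫ t : ℝ,
        |(μ {ω' | ⟪θ, X ω'⟫ > t}).toReal - (if ⟪θ, X ω⟫ > t then (1:ℝ) else 0)|)
        ≤ (∫ ω', |⟪θ, X ω'⟫| ∂μ) + 2 * ‖X ω‖ :=
          inner_bound' μ _ hZm hZi _ _ (habs ω)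
      _ ≤ C := add_le_add (integral_mono hZi.abs hmom habs) le_rfl
  by_cases hint : Integrable (fun θ => ∫ t : ℝ,
      |(μ {ω' | ⟪θ, X ω'⟫ > t}).toReal - (if ⟪θ, X ω⟫ > t then (1:ℝ) else 0)|) σ
  · calc (∫ θ, (∫ t : ℝ,
        |(μ {ω' | ⟪θ, X ω'⟫ > t}).toReal - (if ⟪θ, X ω⟫ > t then (1:ℝ) else 0)|) ∂σ)
        ≤ ∫ _, C ∂σ := integral_mono_ae hint (integrable_const C) hbound
      _ = C := by simp
      _ ≤ (∫ ω', ‖X ω'‖ ∂μ) + 4 * ‖X ω‖ := by rw [hC]; linarith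
  · rw [integral_undef hint]
    linarith
end
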